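/- arXiv:1101.5140 — 2 statements merged into one kernel-verified Lean document; each statement's English description precedes it below -/
import Mathlib

section
/- If X is a reduced set of points in the projective plane whose homogeneous ideal I(X) has Castelnuovo–Mumford regularity r+1, then the ideal I(2X) of the double point scheme 2X (the saturation of I(X)^2) has regularity at most 2r+2, i.e. reg(I(2X)) ≤ 2·reg(I(X)). -/
open MvPolynomial

/-- Hilbert function of `R/I` in degree `t`, where `R = k[x,y,z]` with its
standard grading: the `k`-dimension of the degree-`t` part of the quotient. -/
noncomputable def hilbertFn {k : Type} [Field k]
    (I : Ideal (MvPolynomial (Fin 3) k)) (t : ℕ) : ℕ :=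
  Module.finrank k
    ((MvPolynomial.homogeneousSubmodule (Fin 3) k t) ⧸
      (Submodule.comap (MvPolynomial.homogeneousSubmodule (Fin 3) k t).subtype
        (Submodule.restrictScalars k I)))

/-- The saturated homogeneous ideal of the point of `ℙ²` with homogeneous
coordinates `p`: generated by the linear forms vanishing at `p`. -/
noncomputable def pointIdeal {k : Type} [Field k] (p : Fin 3 → k) : Ideal (MvPolynomial (Fin 3) k) :=
  Ideal.span {f | f ∈ MvPolynomial.homogeneousSubmodule (Fin 3) k 1 ∧ MvPolynomial.eval p f = 0}

/-! For a point `q ≠ 0` choose a linear form `L` with `L(q) = 1`. First-order Taylor expansion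
along the substitution `X j ↦ q j * L` shows that a form of degree `t` lies in `I(q)` iff it
vanishes at `q`, and in `I(q)²` iff its value and gradient (its jet) vanish at `q`. So the Hilbert
function of `2X` in degree `t` is the rank of the jet map at the `n` points, whose image lies,
by Euler's identity, in a subspace of dimension `3n`. Regularity of `X` in degree `r` yields
separators `F i` of degree `r`, and for `t ≥ 2r + 1` the forms `F i ^ 2 * L ^ (t - 2r - 1) * ℓ`,
`ℓ` linear, fill that subspace. -/

namespace MvPolynomial

variable {R σ : Type*}

theorem IsHomogeneous.aeval_algebraMap_mul [CommSemiring R] {A : Type*} [CommSemiring A]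
    [Algebra R A] {F : MvPolynomial σ R} {t : ℕ} (hF : F.IsHomogeneous t) (v : σ → R)
    (a : A) :
    MvPolynomial.aeval (fun j => algebraMap R A (v j) * a) F =
      algebraMap R A (eval v F) * a ^ t := by
  conv_lhs => rw [F.as_sum]
  conv_rhs => rw [F.as_sum]
  simp only [map_sum, Finset.sum_mul]
  refine Finset.sum_congr rfl fun u hu => ?_
  have hdeg : u.sum (fun _ e => e) = t := by
    simpa [Finsupp.weight_apply] using hF (mem_support_iff.mp hu)
  simp only [aeval_monomial, eval_monomial, map_mul, mul_pow, Finsupp.prod_mul, map_finsuppProd,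
    map_pow, mul_assoc]
  rw [← hdeg, Finsupp.sum, ← Finset.prod_pow_eq_pow_sum]
  rfl

theorem IsHomogeneous.sum_mul_eval_pderiv [CommSemiring R] [Fintype σ] {F : MvPolynomial σ R}
    {t : ℕ} (hF : F.IsHomogeneous t) (q : σ → R) :
    ∑ j, q j * eval q (pderiv j F) = t * eval q F := by
  simpa [nsmul_eq_mul] using congrArg (eval q) hF.sum_X_mul_pderiv

theorem sub_aeval_sub_sum_pderiv_mem_sq [CommRing R] [Fintype σ] (y : σ → MvPolynomial σ R)
    (F : MvPolynomial σ R) :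
    F - aeval y F - ∑ j, aeval y (pderiv j F) * (X j - y j) ∈
      Ideal.span (Set.range fun j => X j - y j) ^ 2 := by
  set J := Ideal.span (Set.range fun j => X j - y j)
  have hJ : ∀ j, X j - y j ∈ J := fun j => Ideal.subset_span ⟨j, rfl⟩
  induction F using MvPolynomial.induction_on with
  | C a => simp
  | add p p' hp hp' =>
    convert (J ^ 2).add_mem hp hp' using 1
    simp only [map_add, add_mul, Finset.sum_add_distrib]
    ring
  | mul_X p i hp =>
    have key : p * X i - aeval y (p * X i) - ∑ j, aeval y (pderiv j (p * X i)) * (X j - y j) =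
        X i * (p - aeval y p - ∑ j, aeval y (pderiv j p) * (X j - y j)) +
          (∑ j, aeval y (pderiv j p) * (X j - y j)) * (X i - y i) := by
      have hδ : ∑ j, aeval y (pderiv j (X i : MvPolynomial σ R)) * (X j - y j) = X i - y i := by
        classical simp [pderiv_X, Pi.single_apply]
      simp only [Derivation.leibniz, smul_eq_mul, map_add, map_mul, aeval_X, add_mul, mul_assoc,
        Finset.sum_add_distrib, ← Finset.mul_sum, hδ]
      ring
    rw [key]
    refine Ideal.add_mem _ (Ideal.mul_mem_left _ _ hp) (pow_two J ▸ Ideal.mul_mem_mul ?_ (hJ i))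
    exact Ideal.sum_mem _ fun j _ => Ideal.mul_mem_left _ _ (hJ j)

section Jet

variable {k σ ι : Type*} [Field k]

theorem exists_isHomogeneous_one_eval_eq_one {q : σ → k} (hq : q ≠ 0) :
    ∃ L : MvPolynomial σ k, L.IsHomogeneous 1 ∧ eval q L = 1 := by
  obtain ⟨j, hj⟩ := Function.ne_iff.mp hq
  exact ⟨C (q j)⁻¹ * X j, isHomogeneous_C_mul_X _ j, by simp [inv_mul_cancel₀ hj]⟩

noncomputable def jet (q : σ → k) : MvPolynomial σ k →ₗ[k] k × (σ → k) :=
  (aeval q).toLinearMap.prod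
    (LinearMap.pi fun j => (aeval q).toLinearMap ∘ₗ (pderiv j).toLinearMap)

theorem jet_apply (q : σ → k) (F : MvPolynomial σ k) :
    jet q F = (eval q F, fun j => eval q (pderiv j F)) := by
  ext <;> simp [jet, aeval_eq_eval]

theorem jet_eq_zero_of_mem_sq {q : σ → k} {I : Ideal (MvPolynomial σ k)}
    (hI : I ≤ RingHom.ker (eval q)) {F : MvPolynomial σ k} (hF : F ∈ I ^ 2) : jet q F = 0 := by
  rw [pow_two] at hF
  refine Submodule.mul_induction_on hF (fun a ha b hb => ?_) (fun x y hx hy => ?_)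
  · have ha' : eval q a = 0 := hI ha
    have hb' : eval q b = 0 := hI hb
    simp only [jet_apply, map_mul, Derivation.leibniz, smul_eq_mul, map_add, ha', hb', mul_zero,
      zero_mul, add_zero]
    rfl
  · rw [map_add, hx, hy, add_zero]

theorem jet_sq_mul_eq_zero {q : σ → k} {F : MvPolynomial σ k} (hF : eval q F = 0)
    (G : MvPolynomial σ k) : jet q (F ^ 2 * G) = 0 :=
  jet_eq_zero_of_mem_sq le_rfl (Ideal.mul_mem_right G _ (Ideal.pow_mem_pow hF 2))

noncomputable def evalForms (s : ι → σ → k) (t : ℕ) :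
    homogeneousSubmodule σ k t →ₗ[k] ι → k :=
  LinearMap.pi fun i => (aeval (s i)).toLinearMap ∘ₗ (homogeneousSubmodule σ k t).subtype

@[simp]
theorem evalForms_apply (s : ι → σ → k) (t : ℕ) (F : homogeneousSubmodule σ k t) (i : ι) :
    evalForms s t F i = eval (s i) F := by
  simp [evalForms, aeval_eq_eval]

noncomputable def jetForms (s : ι → σ → k) (t : ℕ) :
    homogeneousSubmodule σ k t →ₗ[k] ι → k × (σ → k) :=
  LinearMap.pi fun i => jet (s i) ∘ₗ (homogeneousSubmodule σ k t).subtype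

@[simp]
theorem jetForms_apply (s : ι → σ → k) (t : ℕ) (F : homogeneousSubmodule σ k t) (i : ι) :
    jetForms s t F i = jet (s i) F :=
  rfl

variable [Fintype σ]

noncomputable def eulerForm (q : σ → k) (t : ℕ) : k × (σ → k) →ₗ[k] k :=
  Fintype.linearCombination k q ∘ₗ LinearMap.snd k k (σ → k) -
    (t : k) • LinearMap.fst k k (σ → k)

theorem eulerForm_apply (q : σ → k) (t : ℕ) (w : k × (σ → k)) :
    eulerForm q t w = ∑ j, q j * w.2 j - t * w.1 := by
  simp [eulerForm, Fintype.linearCombination_apply, mul_comm]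

theorem eulerForm_jet {F : MvPolynomial σ k} {t : ℕ} (hF : F.IsHomogeneous t) (q : σ → k) :
    eulerForm q t (jet q F) = 0 := by
  rw [eulerForm_apply, jet_apply, hF.sum_mul_eval_pderiv, sub_self]

theorem eulerForm_surjective {q : σ → k} (hq : q ≠ 0) (t : ℕ) :
    Function.Surjective (eulerForm q t) := by
  classical
  obtain ⟨j, hj⟩ := Function.ne_iff.mp hq
  intro c
  refine ⟨(0, Pi.single j (c / q j)), ?_⟩
  simp [eulerForm_apply, Pi.single_apply, mul_div_cancel₀ _ hj]

theorem exists_jet_mul_eq {q : σ → k} {P : MvPolynomial σ k} {m : ℕ} (hP : P.IsHomogeneous m)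
    (hPq : eval q P = 1) {w : k × (σ → k)} (hw : eulerForm q (m + 1) w = 0) :
    ∃ ℓ : MvPolynomial σ k, ℓ.IsHomogeneous 1 ∧ jet q (P * ℓ) = w := by
  classical
  set c : σ → k := fun j => w.2 j - w.1 * eval q (pderiv j P)
  have hc : ∑ j, c j * q j = w.1 := by
    have hsum : ∑ j, c j * q j = ∑ j, q j * w.2 j - w.1 * ∑ j, q j * eval q (pderiv j P) := by
      rw [Finset.mul_sum, ← Finset.sum_sub_distrib]
      exact Finset.sum_congr rfl fun j _ => by ring
    rw [eulerForm_apply] at hw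
    push_cast at hw
    rw [hsum, hP.sum_mul_eval_pderiv, hPq]
    linear_combination hw
  refine ⟨∑ j, C (c j) * X j, .sum _ _ _ fun j _ => isHomogeneous_C_mul_X _ j, ?_⟩
  simp [jet_apply, Derivation.leibniz, pderiv_X, Pi.single_apply, hPq, hc, c]

theorem finrank_ker_piMap_eulerForm [Fintype ι] {s : ι → σ → k} (hs : ∀ i, s i ≠ 0)
    (t : ℕ) :
    Module.finrank k (LinearMap.ker (LinearMap.piMap fun i => eulerForm (s i) t)) =
      Fintype.card ι * Fintype.card σ := by
  have hsurj : LinearMap.range (LinearMap.piMap fun i => eulerForm (s i) t) = ⊤ :=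
    LinearMap.range_eq_top.mpr (Function.Surjective.piMap fun i => eulerForm_surjective (hs i) t)
  have h := LinearMap.finrank_range_add_finrank_ker (LinearMap.piMap fun i => eulerForm (s i) t)
  rw [hsurj, finrank_top, Module.finrank_fintype_fun_eq_card, Module.finrank_pi_fintype] at h
  simp only [Module.finrank_prod, Module.finrank_self, Module.finrank_fintype_fun_eq_card,
    Finset.sum_const, Finset.card_univ, smul_eq_mul, mul_add, mul_one] at h
  omega

theorem single_mem_range_jetForms [DecidableEq ι] {s : ι → σ → k} {r t : ℕ}
    (hsep : LinearMap.range (evalForms s r) = ⊤) (ht : 2 * r + 1 ≤ t) {i : ι} (hsi : s i ≠ 0)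
    {w : k × (σ → k)} (hw : eulerForm (s i) t w = 0) :
    Pi.single i w ∈ LinearMap.range (jetForms s t) := by
  obtain ⟨F, hF⟩ : Pi.single i 1 ∈ LinearMap.range (evalForms s r) :=
    hsep ▸ Submodule.mem_top
  have hFs : ∀ i', eval (s i') F = (Pi.single i 1 : ι → k) i' := fun i' => by
    rw [← hF, evalForms_apply]
  obtain ⟨L, hL, hLq⟩ := exists_isHomogeneous_one_eval_eq_one hsi
  obtain ⟨m, rfl⟩ : ∃ m, t = 2 * r + 1 + m := ⟨t - (2 * r + 1), by omega⟩
  have hP : (F.1 ^ 2 * L ^ m).IsHomogeneous (r * 2 + 1 * m) :=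
    (((mem_homogeneousSubmodule _ _).mp F.2).pow 2).mul (hL.pow m)
  have hPq : eval (s i) (F.1 ^ 2 * L ^ m) = 1 := by simp [hFs, hLq]
  rw [show 2 * r + 1 + m = r * 2 + 1 * m + 1 by ring] at hw ⊢
  obtain ⟨ℓ, hℓ, hjet⟩ := exists_jet_mul_eq hP hPq hw
  refine ⟨⟨F.1 ^ 2 * L ^ m * ℓ, (mem_homogeneousSubmodule _ _).mpr (hP.mul hℓ)⟩, ?_⟩
  funext i'
  rcases eq_or_ne i' i with rfl | hi'
  · simpa using hjet
  · simp only [jetForms_apply, Pi.single_eq_of_ne hi', mul_assoc]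
    exact jet_sq_mul_eq_zero (by simp [hFs, hi']) _

theorem range_jetForms [Fintype ι] {s : ι → σ → k} (hs : ∀ i, s i ≠ 0) {r t : ℕ}
    (hsep : LinearMap.range (evalForms s r) = ⊤) (ht : 2 * r + 1 ≤ t) :
    LinearMap.range (jetForms s t) =
      LinearMap.ker (LinearMap.piMap fun i => eulerForm (s i) t) := by
  classical
  refine le_antisymm ?_ fun x hx => ?_
  · rintro _ ⟨F, rfl⟩
    rw [LinearMap.mem_ker]
    funext i
    exact eulerForm_jet ((mem_homogeneousSubmodule _ _).mp F.2) (s i)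
  · rw [← Finset.univ_sum_single x]
    exact Submodule.sum_mem _ fun i _ =>
      single_mem_range_jetForms hsep ht (hs i) (congrFun hx i)

end Jet

end MvPolynomial

section PointsOfThePlane

variable {k : Type} [Field k]

theorem pointIdeal_le_ker_eval (q : Fin 3 → k) : pointIdeal q ≤ RingHom.ker (eval q) :=
  Ideal.span_le.mpr fun _ hf => hf.2

theorem sub_C_mul_mem_pointIdeal {q : Fin 3 → k} {L : MvPolynomial (Fin 3) k}
    (hL : L.IsHomogeneous 1) (hLq : eval q L = 1) (j : Fin 3) :
    X j - C (q j) * L ∈ pointIdeal q :=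
  Ideal.subset_span ⟨(mem_homogeneousSubmodule _ _).mpr ((isHomogeneous_X k j).sub (hL.C_mul _)),
    by simp [hLq]⟩

theorem exists_sub_taylor_mem_pointIdeal_sq {q : Fin 3 → k} (hq : q ≠ 0)
    {F : MvPolynomial (Fin 3) k} {t : ℕ} (hF : F.IsHomogeneous t) :
    ∃ L : MvPolynomial (Fin 3) k, L.IsHomogeneous 1 ∧ eval q L = 1 ∧
      F - C (eval q F) * L ^ t -
        ∑ j, C (eval q (pderiv j F)) * L ^ (t - 1) * (X j - C (q j) * L) ∈
          pointIdeal q ^ 2 := by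
  obtain ⟨L, hL, hLq⟩ := exists_isHomogeneous_one_eval_eq_one hq
  have hψ : ∀ (G : MvPolynomial (Fin 3) k) (d : ℕ), G.IsHomogeneous d →
      aeval (fun j => C (q j) * L) G = C (eval q G) * L ^ d := fun G d hG => by
    simpa only [algebraMap_eq] using hG.aeval_algebraMap_mul q L
  have hspan : Ideal.span (Set.range fun j => X j - C (q j) * L) ≤ pointIdeal q :=
    Ideal.span_le.mpr <| Set.range_subset_iff.mpr (sub_C_mul_mem_pointIdeal hL hLq)
  refine ⟨L, hL, hLq, Ideal.pow_right_mono hspan 2 ?_⟩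
  have hrem := sub_aeval_sub_sum_pderiv_mem_sq (fun j => C (q j) * L) F
  rwa [hψ F t hF, Finset.sum_congr rfl fun j _ => by rw [hψ _ _ (hF.pderiv (i := j))]] at hrem

theorem mem_pointIdeal_iff {q : Fin 3 → k} (hq : q ≠ 0) {F : MvPolynomial (Fin 3) k} {t : ℕ}
    (hF : F.IsHomogeneous t) : F ∈ pointIdeal q ↔ eval q F = 0 := by
  refine ⟨fun h => pointIdeal_le_ker_eval q h, fun h => ?_⟩
  obtain ⟨L, hL, hLq, hrem⟩ := exists_sub_taylor_mem_pointIdeal_sq hq hF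
  rw [h, C_0, zero_mul, sub_zero] at hrem
  rw [← sub_add_cancel F (∑ j, C (eval q (pderiv j F)) * L ^ (t - 1) * (X j - C (q j) * L))]
  exact add_mem (Ideal.pow_le_self two_ne_zero hrem)
    (Ideal.sum_mem _ fun j _ => Ideal.mul_mem_left _ _ (sub_C_mul_mem_pointIdeal hL hLq j))

theorem mem_pointIdeal_sq_iff {q : Fin 3 → k} (hq : q ≠ 0) {F : MvPolynomial (Fin 3) k}
    {t : ℕ} (hF : F.IsHomogeneous t) : F ∈ pointIdeal q ^ 2 ↔ jet q F = 0 := by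
  refine ⟨jet_eq_zero_of_mem_sq (pointIdeal_le_ker_eval q), fun h => ?_⟩
  obtain ⟨L, -, -, hrem⟩ := exists_sub_taylor_mem_pointIdeal_sq hq hF
  rw [jet_apply, Prod.mk_eq_zero, funext_iff] at h
  simpa [h.1, h.2 _] using hrem

theorem hilbertFn_eq_finrank_range {J : Ideal (MvPolynomial (Fin 3) k)} {t : ℕ} {M : Type*}
    [AddCommGroup M] [Module k M] (Φ : homogeneousSubmodule (Fin 3) k t →ₗ[k] M)
    (hΦ : ∀ F, Φ F = 0 ↔ (F : MvPolynomial (Fin 3) k) ∈ J) :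
    hilbertFn J t = Module.finrank k (LinearMap.range Φ) := by
  have hker : Submodule.comap (homogeneousSubmodule (Fin 3) k t).subtype
      (J.restrictScalars k) = LinearMap.ker Φ := by
    ext F
    exact (hΦ F).symm
  rw [hilbertFn, hker]
  exact Φ.quotKerEquivRange.finrank_eq

variable {ι : Type*} {s : ι → Fin 3 → k}

theorem hilbertFn_iInf_pointIdeal (hs : ∀ i, s i ≠ 0) (t : ℕ) :
    hilbertFn (⨅ i, pointIdeal (s i)) t = Module.finrank k (LinearMap.range (evalForms s t)) :=
  hilbertFn_eq_finrank_range _ fun F => by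
    simp [funext_iff, mem_pointIdeal_iff (hs _) F.2]

theorem hilbertFn_iInf_pointIdeal_sq (hs : ∀ i, s i ≠ 0) (t : ℕ) :
    hilbertFn (⨅ i, pointIdeal (s i) ^ 2) t =
      Module.finrank k (LinearMap.range (jetForms s t)) :=
  hilbertFn_eq_finrank_range _ fun F => by
    simp [funext_iff, mem_pointIdeal_sq_iff (hs _) F.2]

theorem range_evalForms_eq_top [Fintype ι] (hs : ∀ i, s i ≠ 0) {r : ℕ}
    (h : hilbertFn (⨅ i, pointIdeal (s i)) r = Fintype.card ι) :
    LinearMap.range (evalForms s r) = ⊤ :=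
  Submodule.eq_top_of_finrank_eq <| by
    rw [← hilbertFn_iInf_pointIdeal hs, h, Module.finrank_fintype_fun_eq_card]

end PointsOfThePlane

theorem stmt0_general {k : Type} [Field k] (n : ℕ)
    (s : Fin n → (Fin 3 → k))
    (hne : ∀ i, s i ≠ 0)
    (r : ℕ)
    (hreg : ∀ t, r ≤ t → hilbertFn (⨅ i, pointIdeal (s i)) t = n) :
    ∀ t, 2 * r + 1 ≤ t → hilbertFn (⨅ i, (pointIdeal (s i)) ^ 2) t = 3 * n := by
  intro t ht
  have hsep := range_evalForms_eq_top hne (by rw [hreg r le_rfl, Fintype.card_fin])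
  rw [hilbertFn_iInf_pointIdeal_sq hne, range_jetForms hne hsep ht,
    finrank_ker_piMap_eulerForm hne, Fintype.card_fin, Fintype.card_fin, mul_comm]

/-- If `X` is a reduced set of `n` points of `ℙ²` whose ideal has
Castelnuovo–Mumford regularity `r+1` (equivalently, for points: the Hilbert
function of `X` equals `n` exactly from degree `r` on), then `I(2X)` has
regularity at most `2r+2` (equivalently, the Hilbert function of the double
point scheme `2X` equals its degree `3n` from degree `2r+1` on). -/
theorem stmt0 {k : Type} [Field k] [IsAlgClosed k] (n : ℕ)
    (s : Fin n → (Fin 3 → k))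
    (hne : ∀ i, s i ≠ 0)
    (hdist : ∀ i j, i ≠ j → ∀ c : k, c • s j ≠ s i)
    (r : ℕ)
    (hreg : ∀ t, r ≤ t → hilbertFn (⨅ i, pointIdeal (s i)) t = n)
    (hmin : r = 0 ∨ hilbertFn (⨅ i, pointIdeal (s i)) (r - 1) ≠ n) :
    ∀ t, 2 * r + 1 ≤ t → hilbertFn (⨅ i, (pointIdeal (s i)) ^ 2) t = 3 * n :=
  stmt0_general n s hne r hreg
end

section
/- Let C be a reduced irreducible plane cubic defined by an irreducible form F of degree 3, and let X be a reduced set of n = 3t points on C with t ≥ 3 whose Hilbert function has first difference (1,2,3,3,…,3,2,1) (value 3 in degrees 2 through t−1, then 2, then 1). Then X is a complete intersection: I(X) = (F, G) for some form G of degree t. -/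
/-!
Let `I = I(X)`. A form `G ∈ I_t` that is not a multiple of `F` exists because
`dim I_t = dim R_{t-3} + 1`. As `F` is prime and `F ∤ G`, the ideal `(F) ∩ (G)` is `(F G)`, so
`dim (F, G)_d = dim R_{d-3} + dim R_{d-t} - dim R_{d-3-t}`; a direct count shows that this is
at least `dim I_d` in every degree. Since `(F, G) ⊆ I` and `I` is homogeneous, equality of
the graded pieces gives `I = (F, G)`.
-/

open MvPolynomial

attribute [local instance] MvPolynomial.gradedAlgebra

theorem Ideal.span_singleton_inf_span_singleton_of_prime {R : Type*} [CommRing R] {p a : R}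
    (hp : Prime p) (hpa : ¬ p ∣ a) :
    Ideal.span {p} ⊓ Ideal.span {a} = Ideal.span {p * a} := by
  ext x
  simp only [Ideal.mem_inf, Ideal.mem_span_singleton]
  refine ⟨fun ⟨hpx, v, hv⟩ => ?_,
    fun h => ⟨dvd_of_mul_right_dvd h, dvd_of_mul_left_dvd h⟩⟩
  obtain ⟨w, rfl⟩ := (hp.dvd_or_dvd (hv ▸ hpx)).resolve_left hpa
  exact ⟨w, by rw [hv]; ring⟩

namespace MvPolynomial

variable {σ : Type*}

theorem IsHomogeneous.aeval_const_mul {R S : Type*} [CommSemiring R] [CommSemiring S]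
    [Algebra R S] {φ : MvPolynomial σ R} {n : ℕ} (hφ : φ.IsHomogeneous n) (r : S)
    (x : σ → S) :
    MvPolynomial.aeval (fun i => r * x i) φ = r ^ n * MvPolynomial.aeval x φ := by
  conv_lhs => rw [φ.as_sum]
  conv_rhs => rw [φ.as_sum]
  simp only [map_sum, Finset.mul_sum, aeval_monomial]
  refine Finset.sum_congr rfl fun u hu => ?_
  have hdeg : ∑ i ∈ u.support, u i = n := by
    rw [← Finsupp.degree_apply, Finsupp.degree_eq_weight_one]
    exact hφ (mem_support_iff.mp hu)
  simp only [mul_pow, Finsupp.prod_mul]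
  rw [Finsupp.prod, Finset.prod_pow_eq_pow_sum, hdeg]
  ring

theorem sub_aeval_mem {R : Type*} [CommRing R] {I : Ideal (MvPolynomial σ R)}
    {g : σ → MvPolynomial σ R} (hg : ∀ i, X i - g i ∈ I) (f : MvPolynomial σ R) :
    f - aeval g f ∈ I := by
  rw [← Ideal.Quotient.eq, eq_comm]
  have : (Ideal.Quotient.mkₐ R I).comp (aeval g) = Ideal.Quotient.mkₐ R I :=
    algHom_ext fun i => by simpa using (Ideal.Quotient.eq.mpr (hg i)).symm
  exact AlgHom.congr_fun this f

variable {k : Type*} [Field k]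

theorem finrank_homogeneousSubmodule [Fintype σ] (d : ℕ) :
    Module.finrank k (homogeneousSubmodule σ k d) = (Fintype.card σ + d - 1).choose d := by
  classical
  rw [homogeneousSubmodule_eq_finsupp_supported]
  change Module.finrank k (restrictSupport k _) = _
  rw [Module.finrank_eq_nat_card_basis (basisRestrictSupport k _), ← Finset.card_univ,
    ← Finset.card_finsuppAntidiag_nat_eq_choose, ← Nat.card_eq_finsetCard]
  congr
  ext u
  simp [Finsupp.degree_eq_sum]

theorem homogeneousComponent_mul_of_le {F : MvPolynomial σ k} {a d : ℕ}
    (hF : F.IsHomogeneous a) (A : MvPolynomial σ k) (h : a ≤ d) :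
    homogeneousComponent d (F * A) = F * homogeneousComponent (d - a) A := by
  rw [← decomposition.decompose'_apply, ← decomposition.decompose'_apply]
  exact DirectSum.coe_decompose_mul_of_left_mem_of_le (homogeneousSubmodule σ k) hF h

theorem homogeneousComponent_mul_of_lt {F : MvPolynomial σ k} {a d : ℕ}
    (hF : F.IsHomogeneous a) (A : MvPolynomial σ k) (h : d < a) :
    homogeneousComponent d (F * A) = 0 := by
  rw [← decomposition.decompose'_apply]
  exact DirectSum.coe_decompose_mul_of_left_mem_of_not_le (homogeneousSubmodule σ k) hF h.not_ge

noncomputable def homogeneousPart (I : Ideal (MvPolynomial σ k)) (d : ℕ) :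
    Submodule k (MvPolynomial σ k) :=
  homogeneousSubmodule σ k d ⊓ I.restrictScalars k

instance [Finite σ] (d : ℕ) : Module.Finite k (homogeneousSubmodule σ k d) :=
  Module.Finite.iff_fg.mpr (homogeneousSubmodule_fg σ k d)

instance [Finite σ] (I : Ideal (MvPolynomial σ k)) (d : ℕ) :
    Module.Finite k (homogeneousPart I d) :=
  Submodule.finiteDimensional_of_le inf_le_left

theorem homogeneousPart_mono {I J : Ideal (MvPolynomial σ k)} (h : I ≤ J) (d : ℕ) :
    homogeneousPart I d ≤ homogeneousPart J d :=
  inf_le_inf_left _ h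

theorem homogeneousPart_inf (I J : Ideal (MvPolynomial σ k)) (d : ℕ) :
    homogeneousPart (I ⊓ J) d = homogeneousPart I d ⊓ homogeneousPart J d := by
  rw [homogeneousPart, homogeneousPart, homogeneousPart, Submodule.restrictScalars_inf,
    inf_inf_distrib_left]

theorem homogeneousPart_sup {I J : Ideal (MvPolynomial σ k)}
    (hI : I.IsHomogeneous (homogeneousSubmodule σ k))
    (hJ : J.IsHomogeneous (homogeneousSubmodule σ k)) (d : ℕ) :
    homogeneousPart (I ⊔ J) d = homogeneousPart I d ⊔ homogeneousPart J d := by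
  refine le_antisymm ?_ (sup_le (homogeneousPart_mono le_sup_left d)
    (homogeneousPart_mono le_sup_right d))
  rintro x ⟨hx, hxIJ⟩
  obtain ⟨y, hy, z, hz, rfl⟩ := Submodule.mem_sup.mp hxIJ
  rw [← homogeneousComponent_eq_self hx, map_add]
  exact Submodule.add_mem_sup
    ⟨homogeneousComponent_mem d y, homogeneousComponent_mem_of_mem hI hy d⟩
    ⟨homogeneousComponent_mem d z, homogeneousComponent_mem_of_mem hJ hz d⟩

theorem isHomogeneous_span_singleton {F : MvPolynomial σ k} {a : ℕ} (hF : F.IsHomogeneous a) :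
    (Ideal.span {F}).IsHomogeneous (homogeneousSubmodule σ k) :=
  Ideal.homogeneous_span _ _ fun _ hx => ⟨a, (Set.mem_singleton_iff.mp hx) ▸ hF⟩

theorem homogeneousPart_span_singleton_of_lt {F : MvPolynomial σ k} {a d : ℕ}
    (hF : F.IsHomogeneous a) (h : d < a) : homogeneousPart (Ideal.span {F}) d = ⊥ := by
  refine eq_bot_iff.mpr fun x ⟨hx, hxF⟩ => ?_
  obtain ⟨A, rfl⟩ := Ideal.mem_span_singleton'.mp hxF
  rw [Submodule.mem_bot, ← homogeneousComponent_eq_self hx, mul_comm,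
    homogeneousComponent_mul_of_lt hF A h]

theorem homogeneousPart_span_singleton {F : MvPolynomial σ k} {a : ℕ}
    (hF : F.IsHomogeneous a) (e : ℕ) :
    homogeneousPart (Ideal.span {F}) (a + e) =
      (homogeneousSubmodule σ k e).map (LinearMap.mulLeft k F) := by
  apply le_antisymm
  · rintro x ⟨hx, hxF⟩
    obtain ⟨A, rfl⟩ := Ideal.mem_span_singleton'.mp hxF
    rw [← homogeneousComponent_eq_self hx, mul_comm,
      homogeneousComponent_mul_of_le hF A (Nat.le_add_right a e), Nat.add_sub_cancel_left]
    exact ⟨_, homogeneousComponent_mem e A, rfl⟩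
  · rintro _ ⟨q, hq, rfl⟩
    exact ⟨hF.mul hq, Ideal.mul_mem_right q _ (Ideal.mem_span_singleton_self F)⟩

theorem finrank_homogeneousPart_span_singleton [Finite σ] {F : MvPolynomial σ k} {a : ℕ}
    (hF : F.IsHomogeneous a) (hF0 : F ≠ 0) (d : ℕ) :
    Module.finrank k (homogeneousPart (Ideal.span {F}) d) =
      if a ≤ d then Module.finrank k (homogeneousSubmodule σ k (d - a)) else 0 := by
  split_ifs with h
  · obtain ⟨e, rfl⟩ := Nat.exists_eq_add_of_le h
    rw [homogeneousPart_span_singleton hF, Nat.add_sub_cancel_left]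
    exact (Submodule.equivMapOfInjective _ (mul_right_injective₀ hF0) _).finrank_eq.symm
  · rw [homogeneousPart_span_singleton_of_lt hF (not_le.mp h), finrank_bot]

theorem finrank_homogeneousPart_span_pair [Finite σ] {F G : MvPolynomial σ k} {a b : ℕ}
    (hF : F.IsHomogeneous a) (hG : G.IsHomogeneous b) (hFp : Prime F) (hFG : ¬ F ∣ G) (d : ℕ) :
    Module.finrank k (homogeneousPart (Ideal.span {F, G}) d) +
        Module.finrank k (homogeneousPart (Ideal.span {F * G}) d) =
      Module.finrank k (homogeneousPart (Ideal.span {F}) d) +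
        Module.finrank k (homogeneousPart (Ideal.span {G}) d) := by
  rw [← Ideal.span_singleton_inf_span_singleton_of_prime hFp hFG, homogeneousPart_inf,
    Ideal.span_insert, homogeneousPart_sup (isHomogeneous_span_singleton hF)
      (isHomogeneous_span_singleton hG)]
  exact Submodule.finrank_sup_add_finrank_inf_eq _ _

theorem exists_isHomogeneous_mem_not_dvd [Finite σ] {I : Ideal (MvPolynomial σ k)}
    {F : MvPolynomial σ k} {a d : ℕ} (hF : F.IsHomogeneous a) (hF0 : F ≠ 0) (hFI : F ∈ I)
    (had : a ≤ d)
    (hlt : Module.finrank k (homogeneousSubmodule σ k (d - a)) <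
      Module.finrank k (homogeneousPart I d)) :
    ∃ G : MvPolynomial σ k, G.IsHomogeneous d ∧ G ∈ I ∧ ¬ F ∣ G := by
  have hFd : Module.finrank k (homogeneousPart (Ideal.span {F}) d) =
      Module.finrank k (homogeneousSubmodule σ k (d - a)) := by
    rw [finrank_homogeneousPart_span_singleton hF hF0, if_pos had]
  have hle : homogeneousPart (Ideal.span {F}) d ≤ homogeneousPart I d :=
    homogeneousPart_mono ((Ideal.span_singleton_le_iff_mem I).mpr hFI) d
  obtain ⟨G, ⟨hGd, hGI⟩, hGF⟩ :=
    SetLike.exists_of_lt (Submodule.lt_of_le_of_finrank_lt_finrank hle (hFd ▸ hlt))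
  exact ⟨G, hGd, hGI, fun hdvd => hGF ⟨hGd, Ideal.mem_span_singleton.mpr hdvd⟩⟩

theorem eq_of_le_of_finrank_homogeneousPart_le [Finite σ] {I J : Ideal (MvPolynomial σ k)}
    (hJI : J ≤ I) (hI : I.IsHomogeneous (homogeneousSubmodule σ k))
    (h : ∀ d, Module.finrank k (homogeneousPart I d) ≤ Module.finrank k (homogeneousPart J d)) :
    J = I := by
  refine le_antisymm hJI fun x hx => ?_
  rw [← sum_homogeneousComponent x]
  refine Ideal.sum_mem _ fun d _ => ?_
  have hpart := Submodule.eq_of_le_of_finrank_le (homogeneousPart_mono hJI d) (h d)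
  have hxd : homogeneousComponent d x ∈ homogeneousPart I d :=
    ⟨homogeneousComponent_mem d x, homogeneousComponent_mem_of_mem hI hx d⟩
  exact (hpart ▸ hxd).2

end MvPolynomial

section PlaneCurves

variable {k : Type} [Field k]

theorem finrank_homogeneousSubmodule_fin_three (d : ℕ) :
    Module.finrank k (homogeneousSubmodule (Fin 3) k d) = (d + 2).choose 2 := by
  rw [finrank_homogeneousSubmodule, Fintype.card_fin, show 3 + d - 1 = d + 2 by omega,
    Nat.choose_symm_add]

theorem finrank_homogeneousSubmodule_fin_three_add_three (e : ℕ) :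
    Module.finrank k (homogeneousSubmodule (Fin 3) k (e + 3)) =
      Module.finrank k (homogeneousSubmodule (Fin 3) k e) + 3 * e + 9 := by
  simp only [finrank_homogeneousSubmodule_fin_three, Nat.choose_succ_succ', Nat.choose_zero_right,
    Nat.reduceAdd, Nat.choose_one_right]
  omega

theorem hilbertFn_add_finrank_homogeneousPart (I : Ideal (MvPolynomial (Fin 3) k)) (d : ℕ) :
    hilbertFn I d + Module.finrank k (homogeneousPart I d) =
      Module.finrank k (homogeneousSubmodule (Fin 3) k d) := by
  rw [hilbertFn, homogeneousPart, ← Submodule.map_comap_subtype,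
    Submodule.finrank_map_subtype_eq]
  exact Submodule.finrank_quotient_add_finrank _

theorem isHomogeneous_pointIdeal (p : Fin 3 → k) :
    (pointIdeal p).IsHomogeneous (homogeneousSubmodule (Fin 3) k) :=
  Ideal.homogeneous_span _ _ fun _ hx => ⟨1, hx.1⟩

theorem mem_pointIdeal_of_isHomogeneous {p : Fin 3 → k} (hp : p ≠ 0)
    {h : MvPolynomial (Fin 3) k} {d : ℕ} (hh : h.IsHomogeneous d) (hv : eval p h = 0) :
    h ∈ pointIdeal p := by
  obtain ⟨j, hj⟩ := Function.ne_iff.mp hp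
  -- project from `p` onto the line `X j`: substitute `X i ↦ (p i / p j) X j`
  let c : Fin 3 → k := fun i => (p j)⁻¹ * p i
  have hlin : ∀ i, X i - X j * C (c i) ∈ pointIdeal p := fun i =>
    Ideal.subset_span
      ⟨(isHomogeneous_X k i).sub (mul_comm (C (c i)) _ ▸ isHomogeneous_C_mul_X _ j),
        by simp [c, mul_inv_cancel_left₀ hj]⟩
  have hc : aeval c h = 0 := by
    change aeval (fun i => (p j)⁻¹ * p i) h = 0
    rw [hh.aeval_const_mul, show aeval p h = eval p h from rfl, hv, mul_zero]
  have hsub : aeval (fun i => X j * C (c i)) h = 0 := by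
    rw [hh.aeval_const_mul, show aeval (fun i => C (c i)) h = C (aeval c h) from
      aeval_algebraMap_apply (MvPolynomial (Fin 3) k) c h, hc, map_zero, mul_zero]
  simpa only [hsub, sub_zero] using sub_aeval_mem hlin h

theorem finrank_homogeneousPart_le_of_hilbertFn {I : Ideal (MvPolynomial (Fin 3) k)}
    {F G : MvPolynomial (Fin 3) k} {t : ℕ} (ht : 3 ≤ t) (hF : F.IsHomogeneous 3)
    (hG : G.IsHomogeneous t) (hFp : Prime F) (hFG : ¬ F ∣ G)
    (hh0 : hilbertFn I 0 = 1) (hhmid : ∀ i, 1 ≤ i → i ≤ t - 1 → hilbertFn I i = 3 * i)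
    (hht : hilbertFn I t = 3 * t - 1) (hhend : ∀ i, t + 1 ≤ i → hilbertFn I i = 3 * t)
    (d : ℕ) :
    Module.finrank k (homogeneousPart I d) ≤
      Module.finrank k (homogeneousPart (Ideal.span {F, G}) d) := by
  have hG0 : G ≠ 0 := fun h => hFG (h ▸ dvd_zero F)
  have hI := hilbertFn_add_finrank_homogeneousPart I d
  have hCI := finrank_homogeneousPart_span_pair hF hG hFp hFG d
  rw [finrank_homogeneousPart_span_singleton hF hFp.ne_zero,
    finrank_homogeneousPart_span_singleton hG hG0,
    finrank_homogeneousPart_span_singleton (hF.mul hG) (mul_ne_zero hFp.ne_zero hG0)] at hCI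
  obtain ⟨hN0, hN1, hN2⟩ : Module.finrank k (homogeneousSubmodule (Fin 3) k 0) = 1 ∧
      Module.finrank k (homogeneousSubmodule (Fin 3) k 1) = 3 ∧
      Module.finrank k (homogeneousSubmodule (Fin 3) k 2) = 6 := by
    simp only [finrank_homogeneousSubmodule_fin_three]
    decide
  rcases lt_or_ge d 3 with hd | hd
  · interval_cases d
    · rw [hh0] at hI; omega
    · rw [hhmid 1 le_rfl (by omega)] at hI; omega
    · rw [hhmid 2 (by omega) (by omega)] at hI; omega
  obtain ⟨e, rfl⟩ := Nat.exists_eq_add_of_le' hd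
  have hstep := finrank_homogeneousSubmodule_fin_three_add_three (k := k) e
  rw [if_pos hd, Nat.add_sub_cancel] at hCI
  rcases lt_or_ge (e + 3) t with hdt | hdt
  · rw [hhmid _ (by omega) (by omega)] at hI
    rw [if_neg (by omega), if_neg (by omega)] at hCI
    omega
  obtain ⟨f, hf⟩ := Nat.exists_eq_add_of_le hdt
  rw [if_pos hdt, show e + 3 - t = f by omega] at hCI
  rcases Nat.eq_zero_or_pos f with rfl | hf0
  · rw [show hilbertFn I (e + 3) = 3 * t - 1 by rw [hf, add_zero, hht]] at hI
    rw [if_neg (by omega)] at hCI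
    omega
  rw [hhend _ (by omega)] at hI
  rcases lt_or_ge f 3 with hf3 | hf3
  · rw [if_neg (by omega)] at hCI
    interval_cases f <;> omega
  · obtain ⟨g, rfl⟩ := Nat.exists_eq_add_of_le' hf3
    have hstep' := finrank_homogeneousSubmodule_fin_three_add_three (k := k) g
    rw [if_pos (by omega), show e + 3 - (3 + t) = g by omega] at hCI
    omega

end PlaneCurves

theorem stmt7_general {k : Type} [Field k] (t : ℕ) (ht : 3 ≤ t)
    (F : MvPolynomial (Fin 3) k)
    (hF : F.IsHomogeneous 3) (hirr : Irreducible F)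
    (s : Fin (3 * t) → (Fin 3 → k))
    (hne : ∀ i, s i ≠ 0)
    (honC : ∀ i, MvPolynomial.eval (s i) F = 0)
    (hh0 : hilbertFn (⨅ i, pointIdeal (s i)) 0 = 1)
    (hhmid : ∀ i, 1 ≤ i → i ≤ t - 1 → hilbertFn (⨅ i', pointIdeal (s i')) i = 3 * i)
    (hht : hilbertFn (⨅ i, pointIdeal (s i)) t = 3 * t - 1)
    (hhend : ∀ i, t + 1 ≤ i → hilbertFn (⨅ i', pointIdeal (s i')) i = 3 * t) :
    ∃ G : MvPolynomial (Fin 3) k, G.IsHomogeneous t ∧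
      (⨅ i, pointIdeal (s i)) = Ideal.span {F, G} := by
  set I := ⨅ i, pointIdeal (s i)
  have hFp : Prime F := hirr.prime
  have hFI : F ∈ I :=
    Ideal.mem_iInf.mpr fun i => mem_pointIdeal_of_isHomogeneous (hne i) hF (honC i)
  obtain ⟨G, hG, hGI, hFG⟩ : ∃ G, G.IsHomogeneous t ∧ G ∈ I ∧ ¬ F ∣ G := by
    refine exists_isHomogeneous_mem_not_dvd hF hFp.ne_zero hFI ht ?_
    have hIt := hilbertFn_add_finrank_homogeneousPart I t
    have hN := finrank_homogeneousSubmodule_fin_three_add_three (k := k) (t - 3)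
    rw [Nat.sub_add_cancel ht] at hN
    omega
  refine ⟨G, hG, (eq_of_le_of_finrank_homogeneousPart_le ?_ ?_ fun d => ?_).symm⟩
  · exact Ideal.span_le.mpr (Set.insert_subset hFI (Set.singleton_subset_iff.mpr hGI))
  · exact Ideal.IsHomogeneous.iInf fun i => isHomogeneous_pointIdeal (s i)
  · exact finrank_homogeneousPart_le_of_hilbertFn ht hF hG hFp hFG hh0 hhmid hht hhend d

/-- a reduced set `X` of `n = 3t` points (`t ≥ 3`) on an
irreducible cubic `C = V(F)` whose Hilbert function has first difference
`(1,2,3,…,3,2,1)` (i.e. `h(0)=1`, `h(i)=3i` for `1 ≤ i ≤ t-1`, `h(t)=3t-1`,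
`h(i)=3t` for `i ≥ t+1`) is a complete intersection `I(X) = (F, G)` with
`deg G = t`. -/
theorem stmt7 {k : Type} [Field k] [IsAlgClosed k] (t : ℕ) (ht : 3 ≤ t)
    (F : MvPolynomial (Fin 3) k)
    (hF : F.IsHomogeneous 3) (hirr : Irreducible F)
    (s : Fin (3 * t) → (Fin 3 → k))
    (hne : ∀ i, s i ≠ 0)
    (hdist : ∀ i j, i ≠ j → ∀ c : k, c • s j ≠ s i)
    (honC : ∀ i, MvPolynomial.eval (s i) F = 0)
    (hh0 : hilbertFn (⨅ i, pointIdeal (s i)) 0 = 1)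
    (hhmid : ∀ i, 1 ≤ i → i ≤ t - 1 → hilbertFn (⨅ i', pointIdeal (s i')) i = 3 * i)
    (hht : hilbertFn (⨅ i, pointIdeal (s i)) t = 3 * t - 1)
    (hhend : ∀ i, t + 1 ≤ i → hilbertFn (⨅ i', pointIdeal (s i')) i = 3 * t) :
    ∃ G : MvPolynomial (Fin 3) k, G.IsHomogeneous t ∧
      (⨅ i, pointIdeal (s i)) = Ideal.span {F, G} :=
  stmt7_general t ht F hF hirr s hne honC hh0 hhmid hht hhend
end
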